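/- For a Hilbert C*-module M over a C*-algebra A and a bounded A-antilinear functional f in the dual module M', the set J_f = {a ∈ A : f·a ∈ M} is a closed right ideal in A. -/

import Mathlib

open scoped RightActions

/-- The Hilbert C⋆-module class as it stood in the older Mathlib (right `A`-action,
inner product `A`-linear in the second argument); Mathlib's `CStarModule` now uses a left action. -/
class CStarModuleRight (A E : Type*) [NonUnitalSemiring A] [StarRing A]
    [Module ℂ A] [AddCommGroup E] [Module ℂ E] [PartialOrder A] [SMul Aᵐᵒᵖ E] [Norm A] [Norm E]
    extends Inner A E where
  inner_add_right {x} {y} {z} : inner x (y + z) = inner x y + inner x z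
  inner_self_nonneg {x} : 0 ≤ inner x x
  inner_self {x} : inner x x = 0 ↔ x = 0
  inner_op_smul_right {a : A} {x y : E} : inner x (y <• a) = inner x y * a
  inner_smul_right_complex {z : ℂ} {x} {y} : inner x (z • y) = z • inner x y
  star_inner x y : star (inner x y) = inner y x
  norm_eq_sqrt_norm_inner_self x : ‖x‖ = √‖inner x x‖

section Defs

variable {A : Type*} [CStarAlgebra A] [PartialOrder A] [StarOrderedRing A]
variable {E : Type*} [NormedAddCommGroup E] [NormedSpace ℂ E] [SMul Aᵐᵒᵖ E] [CStarModuleRight A E]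

/-- Membership in the dual module `M'`: a bounded `A`-antilinear functional on `E`
(the functional `f` plays the role of `m ↦ ⟨m, f⟩`). -/
def IsDualFunctional (f : E → A) : Prop :=
  (∀ x y, f (x + y) = f x + f y) ∧
  (∀ (c : ℂ) (x : E), f (c • x) = (starRingEnd ℂ) c • f x) ∧
  (∀ (x : E) (a : A), f (x <• a) = star a * f x) ∧
  ∃ C : ℝ, ∀ x, ‖f x‖ ≤ C * ‖x‖

/-- The canonical image `m̂` of `m ∈ M` in the dual module: `m̂ x = ⟨x, m⟩`. -/
def mhat (m : E) : E → A := fun x => inner A x m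

/-- The right action of `A` on dual functionals: `f·a`. -/
def dualAct (f : E → A) (a : A) : E → A := fun x => f x * a

/-- The right ideal `J_f = {a ∈ A : f·a ∈ M}`. -/
def Jf (f : E → A) : Set A := {a : A | ∃ m : E, dualAct f a = mhat m}

/-- The right ideal `J_f` is essential in `A`. -/
def JfEssential (f : E → A) : Prop := ∀ a : A, (∀ j ∈ Jf f, a * j = 0) → a = 0

/-- The norm of a functional in the dual module (operator norm). -/
noncomputable def dualNorm (f : E → A) : ℝ :=
  sInf {C : ℝ | 0 ≤ C ∧ ∀ x, ‖f x‖ ≤ C * ‖x‖}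

end Defs

variable {A : Type*} [CStarAlgebra A] [PartialOrder A] [StarOrderedRing A]
variable {E : Type*} [NormedAddCommGroup E] [NormedSpace ℂ E] [SMul Aᵐᵒᵖ E] [CStarModuleRight A E]

/-!
If `f·aₙ = m̂ₙ` and `aₙ → a`, then testing against `d = mₙ - mₖ` gives
`‖d‖² = ‖⟨d, d⟩‖ = ‖f d · (aₙ - aₖ)‖ ≤ C ‖d‖ ‖aₙ - aₖ‖` for a bound `C` of `f`, so `(mₙ)` is
Cauchy; its limit represents `f·a` because `⟨x, ·⟩` is continuous by the Cauchy–Schwarz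
inequality `‖⟨x, y⟩‖ ≤ ‖x‖ ‖y‖`. The ideal properties only use that `⟨x, ·⟩` is `A`-linear.
-/

namespace CStarModuleRight

section Ring

variable {A E : Type*} [NonUnitalRing A] [StarRing A] [Module ℂ A] [PartialOrder A] [Norm A]
  [AddCommGroup E] [Module ℂ E] [Norm E] [SMul Aᵐᵒᵖ E] [CStarModuleRight A E]

def innerRight (x : E) : E →+ A :=
  AddMonoidHom.mk' (inner A x) fun _ _ => inner_add_right

lemma inner_zero_right (x : E) : inner A x (0 : E) = 0 :=
  map_zero (innerRight x)

lemma inner_sub_right (x y z : E) : inner A x (y - z) = inner A x y - inner A x z :=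
  map_sub (innerRight x) y z

lemma inner_sub_left (x y z : E) : inner A (x - y) z = inner A x z - inner A y z := by
  rw [← star_inner z, inner_sub_right, star_sub, star_inner, star_inner]

lemma inner_op_smul_left (a : A) (x y : E) : inner A (x <• a) y = star a * inner A x y := by
  rw [← star_inner y, inner_op_smul_right, star_mul, star_inner]

lemma inner_smul_right_real (r : ℝ) (x y : E) : inner A x (r • y) = r • inner A x y := by
  rw [← Complex.coe_smul, inner_smul_right_complex, Complex.coe_smul]

lemma inner_smul_left_real [StarModule ℂ A] (r : ℝ) (x y : E) :
    inner A (r • x) y = r • inner A x y := by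
  rw [← star_inner y, inner_smul_right_real, ← Complex.coe_smul, star_smul, Complex.star_def,
    Complex.conj_ofReal, Complex.coe_smul, star_inner]

end Ring

section CStarAlgebra

variable {A E : Type*} [CStarAlgebra A] [PartialOrder A]
  [NormedAddCommGroup E] [Module ℂ E] [SMul Aᵐᵒᵖ E] [CStarModuleRight A E]

lemma norm_sq_eq_norm_inner_self (x : E) : ‖x‖ ^ 2 = ‖inner A x x‖ := by
  rw [norm_eq_sqrt_norm_inner_self (A := A) x, Real.sq_sqrt (norm_nonneg _)]

variable [StarOrderedRing A]

lemma inner_mul_inner_swap_le (x y : E) :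
    inner A y x * inner A x y ≤ ‖x‖ ^ 2 • inner A y y := by
  rcases eq_or_ne x 0 with rfl | hx
  · simp [inner_zero_right]
  have ht : 0 < ‖x‖ ^ 2 := by
    rw [norm_sq_eq_norm_inner_self (A := A), norm_pos_iff]
    exact fun h => hx (inner_self.1 h)
  have key : ∀ a : A, 0 ≤ ‖x‖ ^ 2 • (star a * a) - ‖x‖ ^ 2 • (star a * inner A x y)
      - ‖x‖ ^ 2 • (inner A y x * a) + ‖x‖ ^ 2 • (‖x‖ ^ 2 • inner A y y) := fun a =>
    calc (0 : A) ≤ inner A (x <• a - ‖x‖ ^ 2 • y) (x <• a - ‖x‖ ^ 2 • y) := inner_self_nonneg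
      _ = star a * inner A x x * a - ‖x‖ ^ 2 • (star a * inner A x y)
          - ‖x‖ ^ 2 • (inner A y x * a) + ‖x‖ ^ 2 • (‖x‖ ^ 2 • inner A y y) := by
        simp only [inner_sub_left, inner_sub_right, inner_op_smul_left, inner_op_smul_right,
          inner_smul_left_real, inner_smul_right_real, sub_mul, smul_sub, smul_mul_assoc, mul_assoc]
        abel
      _ ≤ _ := by
        gcongr
        rw [norm_sq_eq_norm_inner_self (A := A)]
        exact CStarAlgebra.star_left_conjugate_le_norm_smul (star_inner x x)
  have := key (inner A x y)
  rw [star_inner, sub_self, zero_sub, ← sub_eq_neg_add, sub_nonneg] at this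
  exact (smul_le_smul_iff_of_pos_left ht).1 this

lemma norm_inner_le (x y : E) : ‖inner A x y‖ ≤ ‖x‖ * ‖y‖ := by
  have : ‖inner A x y‖ ^ 2 ≤ (‖x‖ * ‖y‖) ^ 2 :=
    calc ‖inner A x y‖ ^ 2 = ‖inner A y x * inner A x y‖ := by
          rw [← star_inner x, CStarRing.norm_star_mul_self, sq]
      _ ≤ ‖‖x‖ ^ 2 • inner A y y‖ := by
          refine CStarAlgebra.norm_le_norm_of_nonneg_of_le ?_ (inner_mul_inner_swap_le x y)
          rw [← star_inner x]
          exact star_mul_self_nonneg _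
      _ = (‖x‖ * ‖y‖) ^ 2 := by
          rw [norm_smul, mul_pow, norm_sq_eq_norm_inner_self (A := A) y,
            Real.norm_of_nonneg (by positivity)]
  exact (pow_le_pow_iff_left₀ (norm_nonneg _) (by positivity) two_ne_zero).1 this

lemma continuous_inner_right (x : E) : Continuous (inner A x : E → A) :=
  AddMonoidHomClass.continuous_of_bound (innerRight x) ‖x‖ (norm_inner_le x)

end CStarAlgebra

end CStarModuleRight

section Jf

variable {A E : Type*} [CStarAlgebra A] [PartialOrder A] [NormedAddCommGroup E] [NormedSpace ℂ E]
  [SMul Aᵐᵒᵖ E] [CStarModuleRight A E] {f : E → A}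

lemma dualAct_eq_mhat_iff {a : A} {m : E} :
    dualAct f a = mhat m ↔ ∀ x, f x * a = inner A x m :=
  funext_iff

lemma zero_mem_Jf : (0 : A) ∈ Jf f :=
  ⟨0, dualAct_eq_mhat_iff.2 fun x => by rw [mul_zero, CStarModuleRight.inner_zero_right]⟩

lemma add_mem_Jf {a b : A} (ha : a ∈ Jf f) (hb : b ∈ Jf f) : a + b ∈ Jf f := by
  obtain ⟨m, hm⟩ := ha
  obtain ⟨n, hn⟩ := hb
  refine ⟨m + n, dualAct_eq_mhat_iff.2 fun x => ?_⟩
  rw [mul_add, dualAct_eq_mhat_iff.1 hm, dualAct_eq_mhat_iff.1 hn,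
    CStarModuleRight.inner_add_right]

lemma smul_mem_Jf (c : ℂ) {a : A} (ha : a ∈ Jf f) : c • a ∈ Jf f := by
  obtain ⟨m, hm⟩ := ha
  refine ⟨c • m, dualAct_eq_mhat_iff.2 fun x => ?_⟩
  rw [mul_smul_comm, dualAct_eq_mhat_iff.1 hm, CStarModuleRight.inner_smul_right_complex]

lemma mul_mem_Jf {a : A} (ha : a ∈ Jf f) (b : A) : a * b ∈ Jf f := by
  obtain ⟨m, hm⟩ := ha
  refine ⟨m <• b, dualAct_eq_mhat_iff.2 fun x => ?_⟩
  rw [← mul_assoc, dualAct_eq_mhat_iff.1 hm, CStarModuleRight.inner_op_smul_right]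

lemma norm_sub_le_of_dualAct_eq_mhat {C : ℝ} (hC0 : 0 ≤ C) (hC : ∀ x, ‖f x‖ ≤ C * ‖x‖)
    {a b : A} {m n : E} (hm : dualAct f a = mhat m) (hn : dualAct f b = mhat n) :
    ‖m - n‖ ≤ C * ‖a - b‖ := by
  have hsq : ‖m - n‖ ^ 2 ≤ C * ‖a - b‖ * ‖m - n‖ :=
    calc ‖m - n‖ ^ 2 = ‖inner A (m - n) (m - n)‖ :=
          CStarModuleRight.norm_sq_eq_norm_inner_self _
      _ = ‖f (m - n) * (a - b)‖ := by
        rw [CStarModuleRight.inner_sub_right, mul_sub, dualAct_eq_mhat_iff.1 hm,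
          dualAct_eq_mhat_iff.1 hn]
      _ ≤ ‖f (m - n)‖ * ‖a - b‖ := norm_mul_le _ _
      _ ≤ C * ‖m - n‖ * ‖a - b‖ := by gcongr; exact hC _
      _ = C * ‖a - b‖ * ‖m - n‖ := by ring
  nlinarith [norm_nonneg (m - n), norm_nonneg (a - b), mul_nonneg hC0 (norm_nonneg (a - b))]

variable [StarOrderedRing A]

lemma isClosed_Jf [CompleteSpace E] (hf : ∃ C : ℝ, ∀ x, ‖f x‖ ≤ C * ‖x‖) : IsClosed (Jf f) := by
  obtain ⟨C, hC⟩ := hf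
  have hC' : ∀ x, ‖f x‖ ≤ max C 0 * ‖x‖ := fun x =>
    (hC x).trans (by gcongr; exact le_max_left C 0)
  rw [← isSeqClosed_iff_isClosed]
  intro u a hu hua
  choose m hm using hu
  have hm_cauchy : CauchySeq m := by
    have hu_cauchy := hua.cauchySeq
    rw [cauchySeq_iff_tendsto_dist_atTop_0] at hu_cauchy ⊢
    refine squeeze_zero (fun _ => dist_nonneg) (fun p => ?_)
      (by simpa only [mul_zero] using hu_cauchy.const_mul (max C 0))
    rw [dist_eq_norm, dist_eq_norm]
    exact norm_sub_le_of_dualAct_eq_mhat (le_max_right C 0) hC' (hm _) (hm _)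
  obtain ⟨m₀, hm₀⟩ := cauchySeq_tendsto_of_complete hm_cauchy
  refine ⟨m₀, dualAct_eq_mhat_iff.2 fun x => tendsto_nhds_unique (tendsto_const_nhds.mul hua) ?_⟩
  exact (((CStarModuleRight.continuous_inner_right x).tendsto m₀).comp hm₀).congr fun n =>
    (dualAct_eq_mhat_iff.1 (hm n) x).symm

end Jf

theorem Jf_isClosed_rightIdeal [CompleteSpace E] (f : E → A) (hf : IsDualFunctional f) :
    IsClosed (Jf f) ∧
    (0 : A) ∈ Jf f ∧
    (∀ a ∈ Jf f, ∀ b ∈ Jf f, a + b ∈ Jf f) ∧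
    (∀ (c : ℂ), ∀ a ∈ Jf f, c • a ∈ Jf f) ∧
    (∀ a ∈ Jf f, ∀ b : A, a * b ∈ Jf f) :=
  ⟨isClosed_Jf hf.2.2.2, zero_mem_Jf, fun _ ha _ hb => add_mem_Jf ha hb,
    fun c _ ha => smul_mem_Jf c ha, fun _ ha b => mul_mem_Jf ha b⟩
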